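/- arXiv:1602.00471 — 2 statements merged into one kernel-verified Lean document; each statement's English description precedes it below -/
import Mathlib

section
/- The number of rooted labeled forests on n vertices (with any number of components) equals (n+1)^{n-1}, i.e., ∑_{k=0}^{n} t_{n,k} = (n+1)^{n-1}, where t_{n,k} is the number of rooted forests on n labeled vertices with k rooted trees. -/
/-- `rootedForests n k` is the number of rooted forests on `n` labeled vertices
with exactly `k` rooted trees. -/
noncomputable def rootedForests (n k : ℕ) : ℕ :=
  Nat.card {F : SimpleGraph (Fin n) × Finset (Fin n) //
    F.1.IsAcyclic ∧
    (∀ c : F.1.ConnectedComponent, ∃! v, v ∈ F.2 ∧ F.1.connectedComponentMk v = c) ∧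
    F.2.card = k}

/-!
A rooted forest on `α` is determined by its parent map `p : α → Option α` (`none` at the roots),
and the maps arising this way are exactly those along which every vertex reaches `none`: the graph
consists of the edges `{a, p a}`, and conversely in an acyclic graph the parent of a non-root is its
unique neighbour closer to the root of its component.

These maps are counted by Joyal's bijection between all maps `f : α → Option α` and pairs
(forest parent map, point of `Option α`). If `c₁ < ⋯ < cₘ` are the vertices on the cycles of `f`,
they are rewired into the path `f c₁ → f c₂ → ⋯ → f cₘ → none`, and `f c₁` is marked; conversely
the path from the marked point down to `none` is turned back into the permutation sending the
`i`-th smallest of its vertices to its `i`-th vertex. Hence `(n + 1) · #forests = (n + 1) ^ n`.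
-/

open Function SimpleGraph

theorem List.getElem?_filterMap_of_forall_isSome {α β : Type*} {f : α → Option β} {l : List α}
    (h : ∀ a ∈ l, (f a).isSome) (i : ℕ) : (l.filterMap f)[i]? = l[i]?.bind f := by
  induction l generalizing i with
  | nil => simp
  | cons a l ih =>
    obtain ⟨b, hb⟩ := Option.isSome_iff_exists.1 (h a List.mem_cons_self)
    have ih' := ih (fun x hx => h x (List.mem_cons_of_mem _ hx))
    cases i <;> simp [hb, ih']

theorem List.length_filterMap_of_forall_isSome {α β : Type*} {f : α → Option β} {l : List α}
    (h : ∀ a ∈ l, (f a).isSome) : (l.filterMap f).length = l.length := by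
  refine le_antisymm (List.length_filterMap_le f l) (not_lt.1 fun hlt => ?_)
  obtain ⟨x, hx, hfx⟩ := List.length_filterMap_lt_length_iff_exists.1 hlt
  simpa [hfx] using h x hx

theorem Function.exists_iterate_mem_periodicPts {β : Type*} [Finite β] (g : β → β) (x : β) :
    ∃ k, g^[k] x ∈ periodicPts g := by
  obtain ⟨m, n, hmn, h⟩ := Finite.exists_ne_map_eq_of_infinite fun k => g^[k] x
  wlog hlt : m < n generalizing m n
  · exact this n m hmn.symm h.symm (by omega)
  refine ⟨m, mk_mem_periodicPts (n := n - m) (by omega) ?_⟩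
  change g^[n - m] (g^[m] x) = g^[m] x
  rw [← iterate_add_apply, Nat.sub_add_cancel hlt.le]
  exact h.symm

theorem Set.MapsTo.mem_of_iterate_mem_of_mem_periodicPts {β : Type*} {g : β → β} {s : Set β}
    (hs : MapsTo g s s) {x : β} (hx : x ∈ periodicPts g) {k : ℕ} (hk : g^[k] x ∈ s) : x ∈ s := by
  obtain ⟨n, hn, hper⟩ := mem_periodicPts.1 hx
  have := hs.iterate (n * k - k) hk
  rwa [← iterate_add_apply, Nat.sub_add_cancel (Nat.le_mul_of_pos_left k hn),
    (hper.mul_const k).eq] at this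

theorem Set.InjOn.mem_periodicPts {β : Type*} [Finite β] {g : β → β} {s : Set β}
    (hinj : InjOn g s) (hs : MapsTo g s s) {x : β} (hx : x ∈ s) : x ∈ periodicPts g := by
  obtain ⟨n, hn, hper⟩ := Function.mem_periodicPts.1
    ((hs.restrict_inj.2 hinj).mem_periodicPts (⟨x, hx⟩ : s))
  refine mk_mem_periodicPts hn ?_
  have := congrArg Subtype.val hper.eq
  rwa [hs.iterate_restrict, MapsTo.val_restrict_apply] at this

namespace SimpleGraph

variable {V : Type*} {G : SimpleGraph V}

theorem isAcyclic_of_unique_lower_neighbor (h : V → ℕ)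
    (H : ∀ ⦃a b c⦄, G.Adj a b → G.Adj a c → h b ≤ h a → h c ≤ h a → b = c) : G.IsAcyclic := by
  classical
  -- a highest vertex of a cycle has two distinct lower neighbours on it
  intro v c hc
  obtain ⟨u, hu, hmax⟩ := c.support.toFinset.exists_max_image h ⟨v, by simp⟩
  rw [List.mem_toFinset] at hu
  have hc' := hc.rotate hu
  have hnil : ¬(c.rotate u hu).Nil := hc'.not_nil
  have hsupp : ∀ x ∈ (c.rotate u hu).support, h x ≤ h u := fun x hx =>
    hmax x (List.mem_toFinset.2 ((c.mem_support_rotate_iff u hu).1 hx))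
  exact hc'.snd_ne_penultimate <| H (Walk.adj_snd hnil) (Walk.adj_penultimate hnil).symm
    (hsupp _ (Walk.getVert_mem_support _ _)) (hsupp _ (Walk.getVert_mem_support _ _))

theorem Reachable.exists_adj_dist_add_one {u a : V} (h : G.Reachable u a) (hne : u ≠ a) :
    ∃ b, G.Adj a b ∧ G.dist u b + 1 = G.dist u a := by
  obtain ⟨q, -, hq⟩ := h.exists_path_of_dist
  have hadj := Walk.adj_penultimate (Walk.not_nil_of_ne (p := q) hne)
  refine ⟨q.penultimate, hadj.symm, le_antisymm ?_ ?_⟩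
  · have := dist_le q.dropLast
    rw [Walk.length_dropLast] at this
    have : q.length ≠ 0 := fun h0 => hne (Walk.eq_of_length_eq_zero h0)
    omega
  · have := (show G.Reachable u q.penultimate from ⟨q.dropLast⟩).dist_triangle_left a
    rwa [dist_eq_one_iff_adj.2 hadj] at this

theorem IsAcyclic.eq_of_adj_of_dist_add_one (hG : G.IsAcyclic) {u a b c : V}
    (hu : G.Reachable u a) (hb : G.Adj b a) (hc : G.Adj c a)
    (hbd : G.dist u b + 1 = G.dist u a) (hcd : G.dist u c + 1 = G.dist u a) : b = c := by
  have shortest : ∀ {b}, G.Adj b a → G.dist u b + 1 = G.dist u a →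
      ∃ w : G.Walk u a, w.IsPath ∧ w.penultimate = b := by
    intro b hb hbd
    obtain ⟨q, -, hq⟩ := (hu.trans hb.symm.reachable).exists_path_of_dist
    exact ⟨q.concat hb, Walk.isPath_of_length_eq_dist _ (by rw [Walk.length_concat, hq, hbd]),
      Walk.penultimate_concat _ _⟩
  obtain ⟨w, hw, rfl⟩ := shortest hb hbd
  obtain ⟨w', hw', rfl⟩ := shortest hc hcd
  rw [show w = w' from congrArg Subtype.val ((hG.subsingleton_path u a).elim ⟨w, hw⟩ ⟨w', hw'⟩)]

def IsRootSet (G : SimpleGraph V) (R : Finset V) : Prop :=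
  ∀ c : G.ConnectedComponent, ∃! v, v ∈ R ∧ G.connectedComponentMk v = c

end SimpleGraph

namespace ParentMap

variable {α : Type*}

/-- One step towards the roots, `none` serving as a common root above all roots. -/
def step (p : α → Option α) (x : Option α) : Option α := x.bind p

def IsForest (p : α → Option α) : Prop := ∀ x, ∃ k, (step p)^[k] x = none

@[simp] lemma step_none (p : α → Option α) : step p none = none := rfl

@[simp] lemma step_some (p : α → Option α) (a : α) : step p (some a) = p a := rfl

@[simp] lemma iterate_step_none (p : α → Option α) (k : ℕ) : (step p)^[k] none = none :=
  iterate_fixed rfl k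

variable {p : α → Option α}

noncomputable def depth (hp : IsForest p) (x : Option α) : ℕ := Nat.find (hp x)

section Depth

variable (hp : IsForest p) {x : Option α}

lemma iterate_depth (x : Option α) : (step p)^[depth hp x] x = none := Nat.find_spec (hp x)

lemma depth_le {k : ℕ} (h : (step p)^[k] x = none) : depth hp x ≤ k := Nat.find_min' (hp x) h

lemma iterate_ne_none {k : ℕ} (h : k < depth hp x) : (step p)^[k] x ≠ none :=
  Nat.find_min (hp x) h

lemma iterate_eq_none_of_depth_le {k : ℕ} (h : depth hp x ≤ k) : (step p)^[k] x = none := by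
  rw [← Nat.sub_add_cancel h, iterate_add_apply, iterate_depth, iterate_step_none]

@[simp] lemma depth_none : depth hp none = 0 := Nat.eq_zero_of_le_zero (depth_le hp rfl)

lemma depth_some_pos (a : α) : 0 < depth hp (some a) :=
  Nat.pos_of_ne_zero fun h => by simpa [h] using iterate_depth hp (some a)

lemma depth_step (x : Option α) : depth hp (step p x) = depth hp x - 1 := by
  refine le_antisymm (depth_le hp ?_) (Nat.sub_le_of_le_add (depth_le hp ?_))
  · rw [← iterate_succ_apply]
    exact iterate_eq_none_of_depth_le hp (by omega)
  · rw [iterate_succ_apply, iterate_depth]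

lemma depth_iterate (x : Option α) (k : ℕ) :
    depth hp ((step p)^[k] x) = depth hp x - k := by
  induction k with
  | zero => rfl
  | succ k ih => rw [iterate_succ_apply', depth_step, ih, Nat.sub_sub]

lemma depth_apply_add_one (a : α) : depth hp (p a) + 1 = depth hp (some a) := by
  rw [show p a = step p (some a) from rfl, depth_step, Nat.sub_add_cancel (depth_some_pos hp a)]

end Depth

lemma IsForest.apply_ne_some_self (hp : IsForest p) (a : α) : p a ≠ some a := fun h => by
  simpa [h] using depth_apply_add_one hp a

def graph (p : α → Option α) : SimpleGraph α := SimpleGraph.fromRel fun a b => p a = some b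

lemma graph_adj {a b : α} : (graph p).Adj a b ↔ a ≠ b ∧ (p a = some b ∨ p b = some a) :=
  fromRel_adj _ a b

lemma IsForest.graph_adj (hp : IsForest p) {a b : α} :
    (graph p).Adj a b ↔ p a = some b ∨ p b = some a := by
  rw [ParentMap.graph_adj, and_iff_right_iff_imp]
  rintro (h | h) rfl <;> exact hp.apply_ne_some_self _ h

lemma IsForest.isAcyclic_graph (hp : IsForest p) : (graph p).IsAcyclic := by
  refine isAcyclic_of_unique_lower_neighbor (fun a => depth hp (some a))
    fun a b c hb hc hba hca => ?_
  have parent_of_le : ∀ {b}, (graph p).Adj a b → depth hp (some b) ≤ depth hp (some a) →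
      p a = some b := by
    intro b hab hle
    refine ((hp.graph_adj).1 hab).resolve_right fun h => ?_
    have := depth_apply_add_one hp b
    rw [h] at this
    omega
  exact Option.some_injective _ ((parent_of_le hb hba).symm.trans (parent_of_le hc hca))

lemma reachable_of_apply_eq_some {a b : α} (h : p a = some b) : (graph p).Reachable a b := by
  by_cases hab : a = b
  · exact hab ▸ Reachable.refl a
  · exact (graph_adj.2 ⟨hab, .inl h⟩).reachable

lemma reachable_of_iterate_eq_some {a b : α} {k : ℕ} (h : (step p)^[k] (some a) = some b) :
    (graph p).Reachable a b := by
  induction k generalizing a with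
  | zero => exact Option.some_injective _ h ▸ Reachable.refl a
  | succ k ih =>
    rw [iterate_succ_apply, step_some] at h
    cases hpa : p a with
    | none => simp [hpa] at h
    | some c => exact (reachable_of_apply_eq_some hpa).trans (ih (hpa ▸ h))

section Root

variable (hp : IsForest p) {a b : α}

noncomputable def root (a : α) : α :=
  ((step p)^[depth hp (some a) - 1] (some a)).get <| Option.isSome_iff_ne_none.2 <|
    iterate_ne_none hp (Nat.sub_lt (depth_some_pos hp a) one_pos)

lemma some_root (a : α) : some (root hp a) = (step p)^[depth hp (some a) - 1] (some a) :=
  Option.some_get _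

lemma apply_root (a : α) : p (root hp a) = none := by
  change step p (some (root hp a)) = none
  rw [some_root, ← iterate_succ_apply' (f := step p)]
  exact iterate_eq_none_of_depth_le hp (by omega)

lemma root_eq_self (h : p a = none) : root hp a = a := by
  have hd : depth hp (some a) = 1 := by simpa [h] using (depth_apply_add_one hp a).symm
  exact Option.some_injective _ (by rw [some_root, hd]; rfl)

lemma root_eq_of_apply_eq_some (h : p a = some b) : root hp b = root hp a := by
  have hd := depth_apply_add_one hp a
  obtain ⟨d, hbd⟩ := Nat.exists_eq_add_of_lt (depth_some_pos hp b)
  rw [h, hbd] at hd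
  apply Option.some_injective
  simp only [some_root, hbd, ← hd, Nat.zero_add, Nat.add_sub_cancel, iterate_succ_apply,
    step_some, h]

lemma reachable_root (a : α) : (graph p).Reachable a (root hp a) :=
  reachable_of_iterate_eq_some (some_root hp a).symm

lemma root_eq_of_reachable (h : (graph p).Reachable a b) : root hp a = root hp b := by
  obtain ⟨w⟩ := h
  induction w with
  | nil => rfl
  | cons hadj _ ih =>
    refine Eq.trans ?_ ih
    rcases (IsForest.graph_adj hp).1 hadj with h | h
    · exact (root_eq_of_apply_eq_some hp h).symm
    · exact root_eq_of_apply_eq_some hp h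

end Root

section Roots

variable [Fintype α]

def roots (p : α → Option α) : Finset α := {a | p a = none}

@[simp] lemma mem_roots {a : α} : a ∈ roots p ↔ p a = none := by simp [roots]

lemma IsForest.isRootSet (hp : IsForest p) : (graph p).IsRootSet (roots p) := by
  refine ConnectedComponent.ind fun a => ⟨root hp a, ⟨mem_roots.2 (apply_root hp a),
    ConnectedComponent.sound (reachable_root hp a).symm⟩, ?_⟩
  rintro r ⟨hr, hra⟩
  rw [← root_eq_self hp (mem_roots.1 hr)]
  exact root_eq_of_reachable hp (ConnectedComponent.exact hra)

lemma IsForest.eq_of_graph_eq_of_roots_eq {q : α → Option α} (hp : IsForest p)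
    (hq : IsForest q) (hg : graph p = graph q) (hr : roots p = roots q) : p = q := by
  funext a
  induction h : depth hp (some a) using Nat.strong_induction_on generalizing a with
  | _ d ih =>
  cases hpa : p a with
  | none => exact (mem_roots.1 (hr ▸ mem_roots.2 hpa)).symm
  | some b =>
    have hdb := depth_apply_add_one hp a
    rw [hpa] at hdb
    have hadj : (graph q).Adj a b :=
      hg ▸ ParentMap.graph_adj.2 ⟨fun hab => hp.apply_ne_some_self a (hab ▸ hpa), .inl hpa⟩
    refine ((hq.graph_adj.1 hadj).resolve_right fun hqb => ?_).symm
    have hdba := depth_apply_add_one hp b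
    rw [ih _ (by omega) b rfl, hqb] at hdba
    omega

end Roots

end ParentMap

namespace SimpleGraph.IsRootSet

variable {V : Type*} {G : SimpleGraph V} {R : Finset V} (hR : G.IsRootSet R) {a b : V}

noncomputable def root (a : V) : V := (hR (G.connectedComponentMk a)).exists.choose

lemma root_mem (a : V) : hR.root a ∈ R := (hR _).exists.choose_spec.1

lemma reachable_root (a : V) : G.Reachable (hR.root a) a :=
  ConnectedComponent.exact (hR _).exists.choose_spec.2

lemma eq_root {r : V} (hr : r ∈ R) (h : G.Reachable r a) : r = hR.root a :=
  (hR _).unique ⟨hr, ConnectedComponent.sound h⟩ (hR _).exists.choose_spec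

lemma root_eq_of_reachable (h : G.Reachable a b) : hR.root a = hR.root b :=
  hR.eq_root (hR.root_mem a) ((hR.reachable_root a).trans h)

lemma root_eq_self_iff : hR.root a = a ↔ a ∈ R :=
  ⟨fun h => h ▸ hR.root_mem a, fun h => (hR.eq_root h (.refl a)).symm⟩

noncomputable def height (a : V) : ℕ := G.dist (hR.root a) a

lemma height_eq_zero_iff : hR.height a = 0 ↔ a ∈ R := by
  rw [height, (hR.reachable_root a).dist_eq_zero_iff, root_eq_self_iff]

lemma height_eq_dist (h : G.Reachable a b) : hR.height b = G.dist (hR.root a) b := by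
  rw [height, hR.root_eq_of_reachable h]

lemma exists_adj_height_add_one_iff :
    (∃ b, G.Adj a b ∧ hR.height b + 1 = hR.height a) ↔ a ∉ R := by
  constructor
  · rintro ⟨b, -, hb⟩ ha
    rw [hR.height_eq_zero_iff.2 ha] at hb
    omega
  · intro ha
    obtain ⟨b, hab, hb⟩ :=
      (hR.reachable_root a).exists_adj_dist_add_one (mt hR.root_eq_self_iff.1 ha)
    exact ⟨b, hab, by rwa [hR.height_eq_dist hab.reachable]⟩

open Classical in
noncomputable def parent (a : V) : Option V :=
  if h : ∃ b, G.Adj a b ∧ hR.height b + 1 = hR.height a then some h.choose else none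

lemma parent_eq_none_iff : hR.parent a = none ↔ a ∈ R := by
  rw [← not_iff_not, ← hR.exists_adj_height_add_one_iff, parent]
  split_ifs with h <;> simp [h]

lemma adj_and_height_of_parent_eq_some (h : hR.parent a = some b) :
    G.Adj a b ∧ hR.height b + 1 = hR.height a := by
  rw [parent] at h
  split_ifs at h with hex
  exact Option.some_injective _ h ▸ hex.choose_spec

lemma parent_eq_some_iff (hG : G.IsAcyclic) :
    hR.parent a = some b ↔ G.Adj a b ∧ hR.height b + 1 = hR.height a := by
  refine ⟨hR.adj_and_height_of_parent_eq_some, fun hb => ?_⟩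
  obtain ⟨c, hc⟩ := Option.ne_none_iff_exists'.1
    (mt hR.parent_eq_none_iff.1 (hR.exists_adj_height_add_one_iff.1 ⟨b, hb⟩))
  obtain ⟨hca, hcd⟩ := hR.adj_and_height_of_parent_eq_some hc
  have hdist : ∀ {c}, G.Adj a c → hR.height c + 1 = hR.height a →
      G.dist (hR.root a) c + 1 = G.dist (hR.root a) a := fun hac h => by
    rwa [hR.height_eq_dist hac.reachable] at h
  rw [hc, hG.eq_of_adj_of_dist_add_one (hR.reachable_root a) hca.symm hb.1.symm
    (hdist hca hcd) (hdist hb.1 hb.2)]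

lemma isForest_parent : ParentMap.IsForest hR.parent := by
  suffices h : ∀ d a, hR.height a = d → ∃ k, (ParentMap.step hR.parent)^[k] (some a) = none by
    rintro (_ | a)
    · exact ⟨0, rfl⟩
    · exact h _ a rfl
  intro d
  induction d using Nat.strong_induction_on with
  | _ d ih =>
  rintro a rfl
  cases h : hR.parent a with
  | none => exact ⟨1, by simp [h]⟩
  | some b =>
    obtain ⟨k, hk⟩ := ih _ (by have := (hR.adj_and_height_of_parent_eq_some h).2; omega) b rfl
    exact ⟨k + 1, by rwa [iterate_succ_apply, ParentMap.step_some, h]⟩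

lemma graph_parent (hG : G.IsAcyclic) : ParentMap.graph hR.parent = G := by
  ext a b
  rw [ParentMap.graph_adj, hR.parent_eq_some_iff hG, hR.parent_eq_some_iff hG]
  refine ⟨fun ⟨_, h⟩ => h.elim (·.1) (·.1.symm), fun hab => ⟨hab.ne, ?_⟩⟩
  have := hG.dist_eq_dist_add_one_of_adj_of_reachable (hR.root a) hab (hR.reachable_root a)
  rw [← hR.height_eq_dist hab.reachable, ← hR.height_eq_dist (.refl a)] at this
  exact this.imp (fun h => ⟨hab, h.symm⟩) (fun h => ⟨hab.symm, h.symm⟩)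

lemma roots_parent [Fintype V] : ParentMap.roots hR.parent = R := by
  ext a
  simp [hR.parent_eq_none_iff]

end SimpleGraph.IsRootSet

namespace ParentMap

variable {α : Type*} {p : α → Option α}

noncomputable def forestEquiv (α : Type*) [Fintype α] :
    {p : α → Option α // IsForest p} ≃
      {F : SimpleGraph α × Finset α // F.1.IsAcyclic ∧ F.1.IsRootSet F.2} where
  toFun p := ⟨(graph p.1, roots p.1), p.2.isAcyclic_graph, p.2.isRootSet⟩
  invFun F := ⟨F.2.2.parent, F.2.2.isForest_parent⟩
  left_inv p := Subtype.ext <| IsForest.eq_of_graph_eq_of_roots_eq (IsRootSet.isForest_parent _)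
    p.2 (IsRootSet.graph_parent _ p.2.isAcyclic_graph) (IsRootSet.roots_parent _)
  right_inv F := Subtype.ext <| Prod.ext (IsRootSet.graph_parent _ F.2.1) (IsRootSet.roots_parent _)

lemma none_mem_periodicPts (f : α → Option α) : none ∈ periodicPts (step f) :=
  mk_mem_periodicPts one_pos rfl

lemma IsForest.eq_none_of_mem_periodicPts (hp : IsForest p) {x : Option α}
    (hx : x ∈ periodicPts (step p)) : x = none := by
  obtain ⟨n, hn, hper⟩ := mem_periodicPts.1 hx
  rw [← (hper.mul_const (depth hp x)).eq]
  exact iterate_eq_none_of_depth_le hp (Nat.le_mul_of_pos_left _ hn)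

noncomputable def spine (hp : IsForest p) (x : Option α) : List α :=
  (List.range (depth hp x)).filterMap fun i => (step p)^[i] x

section Spine

variable (hp : IsForest p) (x : Option α)

lemma isSome_iterate_of_mem_range :
    ∀ i ∈ List.range (depth hp x), ((step p)^[i] x).isSome := fun _ hi =>
  Option.isSome_iff_ne_none.2 (iterate_ne_none hp (List.mem_range.1 hi))

lemma getElem?_spine (i : ℕ) : (spine hp x)[i]? = (step p)^[i] x := by
  rw [spine, List.getElem?_filterMap_of_forall_isSome (isSome_iterate_of_mem_range hp x)]
  by_cases hi : i < depth hp x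
  · simp [List.getElem?_range hi]
  · rw [List.getElem?_eq_none (by simpa using hi)]
    exact (iterate_eq_none_of_depth_le hp (by omega)).symm

lemma length_spine : (spine hp x).length = depth hp x := by
  rw [spine, List.length_filterMap_of_forall_isSome (isSome_iterate_of_mem_range hp x),
    List.length_range]

lemma spine_nodup : (spine hp x).Nodup := by
  refine List.nodup_iff_getElem?_ne_getElem?.2 fun i j hij hj h => ?_
  rw [getElem?_spine, getElem?_spine] at h
  have := congrArg (depth hp) h
  rw [depth_iterate, depth_iterate, length_spine] at *
  omega

lemma head?_spine : (spine hp x).head? = x := by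
  rw [List.head?_eq_getElem?, getElem?_spine]
  rfl

end Spine

section Path

variable [DecidableEq α]

def withPath (l : List α) (p : α → Option α) (a : α) : Option α :=
  if a ∈ l then l[l.idxOf a + 1]? else p a

lemma withPath_of_not_mem {l : List α} {a : α} (h : a ∉ l) : withPath l p a = p a := if_neg h

lemma step_withPath_getElem? {l : List α} (hl : l.Nodup) (i : ℕ) :
    step (withPath l p) l[i]? = l[i + 1]? := by
  cases h : l[i]? with
  | none => simp [(List.getElem?_eq_none_iff.1 h).trans (Nat.le_succ i)]
  | some a =>
    obtain ⟨hi, rfl⟩ := List.getElem?_eq_some_iff.1 h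
    simp [withPath, hl.idxOf_getElem]

lemma iterate_step_withPath_getElem? {l : List α} (hl : l.Nodup) (i k : ℕ) :
    (step (withPath l p))^[k] l[i]? = l[i + k]? := by
  induction k with
  | zero => rfl
  | succ k ih => rw [iterate_succ_apply', ih, step_withPath_getElem? hl, Nat.add_assoc]

lemma withPath_spine (hp : IsForest p) (x : Option α) : withPath (spine hp x) p = p := by
  funext a
  unfold withPath
  split_ifs with ha
  · rw [getElem?_spine, iterate_succ_apply', ← getElem?_spine hp, List.getElem?_idxOf ha,
      step_some]
  · rfl

end Path

section Perm

variable [LinearOrder α]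

def withPerm (l : List α) (p : α → Option α) (a : α) : Option α :=
  if a ∈ l then l[(l.toFinset.sort).idxOf a]? else p a

lemma withPerm_of_not_mem {l : List α} {a : α} (h : a ∉ l) : withPerm l p a = p a := if_neg h

lemma withPath_withPerm (l : List α) (p : α → Option α) :
    withPath l (withPerm l p) = withPath l p :=
  funext fun a => by by_cases ha : a ∈ l <;> simp [withPath, withPerm, ha]

lemma filterMap_withPerm_sort {l : List α} (hl : l.Nodup) :
    (l.toFinset.sort (· ≤ ·)).filterMap (withPerm l p) = l := by
  have hlen : (l.toFinset.sort (· ≤ ·)).length = l.length := by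
    rw [Finset.length_sort, List.toFinset_card_of_nodup hl]
  refine List.ext_getElem? fun i => ?_
  rw [List.getElem?_filterMap_of_forall_isSome]
  · by_cases hi : i < l.length
    · have hmem : (l.toFinset.sort (· ≤ ·))[i] ∈ l := by
        simpa using List.getElem_mem (l := l.toFinset.sort (· ≤ ·)) (by omega)
      rw [List.getElem?_eq_getElem (l := l.toFinset.sort (· ≤ ·)) (by omega), Option.bind_some,
        withPerm, if_pos hmem, (Finset.sort_nodup _ _).idxOf_getElem]
    · have hs : (l.toFinset.sort (· ≤ ·))[i]? = none := List.getElem?_eq_none (by omega)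
      rw [hs, List.getElem?_eq_none (by omega)]
      rfl
  · intro a ha
    have ha' : a ∈ l := by simpa using ha
    rw [withPerm, if_pos ha', List.getElem?_eq_getElem (l := l)
      (by rw [← hlen]; exact List.idxOf_lt_length_of_mem ha)]
    rfl

end Perm

section Cyclic

variable [Fintype α] {f : α → Option α}

open Classical in
noncomputable def cyclicSet (f : α → Option α) : Finset α := {a | some a ∈ periodicPts (step f)}

lemma mem_cyclicSet {a : α} : a ∈ cyclicSet f ↔ some a ∈ periodicPts (step f) := by
  simp [cyclicSet]

lemma exists_apply_eq_some_of_mem_cyclicSet {a : α} (ha : a ∈ cyclicSet f) :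
    ∃ b ∈ cyclicSet f, f a = some b := by
  have hfa : step f (some a) ∈ periodicPts (step f) :=
    (bijOn_periodicPts (f := step f)).mapsTo (mem_cyclicSet.1 ha)
  cases h : f a with
  | none =>
    obtain ⟨n, hn, hper⟩ := mem_periodicPts.1 (mem_cyclicSet.1 ha)
    have := hper.eq
    rw [← Nat.sub_add_cancel hn, iterate_succ_apply, step_some, h, iterate_step_none] at this
    exact absurd this (Option.some_ne_none a).symm
  | some b => exact ⟨b, mem_cyclicSet.2 (h ▸ hfa), rfl⟩

lemma isForest_of_eq_off_cyclicSet {q : α → Option α} (hoff : ∀ a ∉ cyclicSet f, q a = f a)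
    (hcyc : ∀ a ∈ cyclicSet f, ∃ k, (step q)^[k] (some a) = none) : IsForest q := by
  classical
  -- up to the first time the `f`-orbit of `x` meets a periodic point, it is also the `q`-orbit
  intro x
  have hex := exists_iterate_mem_periodicPts (step f) x
  have agree : ∀ j ≤ Nat.find hex, (step q)^[j] x = (step f)^[j] x := by
    intro j hj
    induction j with
    | zero => rfl
    | succ j ih =>
      rw [iterate_succ_apply', iterate_succ_apply', ih (by omega)]
      have hj' := Nat.find_min hex (show j < Nat.find hex by omega)
      cases h : (step f)^[j] x with
      | none => exact absurd (h ▸ none_mem_periodicPts f) hj'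
      | some a => exact hoff a fun ha => hj' (h ▸ mem_cyclicSet.1 ha)
  cases h : (step f)^[Nat.find hex] x with
  | none => exact ⟨_, (agree _ le_rfl).trans h⟩
  | some a =>
    obtain ⟨k, hk⟩ := hcyc a (mem_cyclicSet.2 (h ▸ Nat.find_spec hex))
    exact ⟨k + Nat.find hex, by rw [iterate_add_apply, agree _ le_rfl, h, hk]⟩

lemma cyclicSet_eq_of_eq_off (hp : IsForest p) {S : Finset α} (hoff : ∀ a ∉ S, f a = p a)
    (hmaps : ∀ a ∈ S, ∃ b ∈ S, f a = some b) (hinj : Set.InjOn f S) : cyclicSet f = S := by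
  set T : Set (Option α) := {x | ∀ a ∈ x, a ∈ S} -- `some '' S ∪ {none}`
  have hT : Set.MapsTo (step f) T T := by
    rintro (_ | a) ha b hb
    · cases hb
    · obtain ⟨c, hc, hfa⟩ := hmaps a (ha a rfl)
      rw [step_some, hfa, Option.mem_some_iff] at hb
      exact hb ▸ hc
  have hinjT : Set.InjOn (step f) T := by
    rintro (_ | a) ha (_ | b) hb hab
    · rfl
    · obtain ⟨c, -, hc⟩ := hmaps b (hb b rfl)
      simp [hc] at hab
    · obtain ⟨c, -, hc⟩ := hmaps a (ha a rfl)
      simp [hc] at hab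
    · rw [hinj (ha a rfl) (hb b rfl) hab]
  ext a
  rw [mem_cyclicSet]
  refine ⟨fun ha => ?_, fun ha => hinjT.mem_periodicPts hT fun b hb => (Option.some_inj.1 hb) ▸ ha⟩
  -- the orbit of a periodic point outside `S` never enters `T`, so it is also a cycle of `p`
  by_contra haS
  have outside : ∀ j, ∃ b ∉ S, (step f)^[j] (some a) = some b := by
    intro j
    by_contra! hj
    refine haS ((hT.mem_of_iterate_mem_of_mem_periodicPts ha (k := j) fun b hb => ?_) a rfl)
    by_contra hbS
    exact hj b hbS hb
  have agree : ∀ j, (step f)^[j] (some a) = (step p)^[j] (some a) := by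
    intro j
    induction j with
    | zero => rfl
    | succ j ih =>
      obtain ⟨b, hbS, hb⟩ := outside j
      rw [iterate_succ_apply', iterate_succ_apply', ← ih, hb, step_some, step_some, hoff b hbS]
  obtain ⟨n, hn, hper⟩ := mem_periodicPts.1 ha
  exact Option.some_ne_none a (hp.eq_none_of_mem_periodicPts
    (mk_mem_periodicPts hn ((agree n).symm.trans hper.eq)))

variable [LinearOrder α]

noncomputable def cyclicWord (f : α → Option α) : List α := ((cyclicSet f).sort).filterMap f

lemma getElem?_cyclicWord (i : ℕ) : (cyclicWord f)[i]? = ((cyclicSet f).sort)[i]?.bind f := by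
  refine List.getElem?_filterMap_of_forall_isSome (fun a ha => ?_) i
  obtain ⟨b, -, hb⟩ := exists_apply_eq_some_of_mem_cyclicSet ((Finset.mem_sort (· ≤ ·)).1 ha)
  simp [hb]

lemma toFinset_cyclicWord : (cyclicWord f).toFinset = cyclicSet f := by
  ext a
  simp only [cyclicWord, List.mem_toFinset, List.mem_filterMap, Finset.mem_sort]
  constructor
  · rintro ⟨c, hc, hca⟩
    obtain ⟨b, hb, hcb⟩ := exists_apply_eq_some_of_mem_cyclicSet hc
    exact Option.some_injective _ (hcb.symm.trans hca) ▸ hb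
  · intro ha
    obtain ⟨_ | c, hc, hca⟩ := (bijOn_periodicPts (f := step f)).surjOn (mem_cyclicSet.1 ha)
    · cases hca
    · exact ⟨c, mem_cyclicSet.2 hc, hca⟩

lemma cyclicWord_nodup : (cyclicWord f).Nodup := by
  refine List.nodup_iff_getElem?_ne_getElem?.2 fun i j hij hj h => ?_
  have hs : j < ((cyclicSet f).sort).length := by
    rwa [cyclicWord, List.length_filterMap_of_forall_isSome] at hj
    intro a ha
    obtain ⟨b, -, hb⟩ := exists_apply_eq_some_of_mem_cyclicSet ((Finset.mem_sort (· ≤ ·)).1 ha)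
    simp [hb]
  rw [getElem?_cyclicWord, getElem?_cyclicWord, List.getElem?_eq_getElem (by omega),
    List.getElem?_eq_getElem hs, Option.bind_some, Option.bind_some] at h
  have := (bijOn_periodicPts (f := step f)).injOn
    (mem_cyclicSet.1 ((Finset.mem_sort (· ≤ ·)).1 (List.getElem_mem (by omega))))
    (mem_cyclicSet.1 ((Finset.mem_sort (· ≤ ·)).1 (List.getElem_mem hs))) h
  exact absurd ((Finset.sort_nodup _ _).getElem_inj_iff.1 (Option.some_injective _ this)) hij.ne

lemma exists_iterate_withPath_cyclicWord_eq_none {a : α} (ha : a ∈ cyclicSet f) :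
    ∃ k, (step (withPath (cyclicWord f) f))^[k] (some a) = none := by
  rw [← toFinset_cyclicWord, List.mem_toFinset] at ha
  refine ⟨(cyclicWord f).length, ?_⟩
  rw [← List.getElem?_idxOf ha, iterate_step_withPath_getElem? cyclicWord_nodup]
  exact List.getElem?_eq_none (by omega)

lemma isForest_withPath_cyclicWord (f : α → Option α) :
    IsForest (withPath (cyclicWord f) f) :=
  isForest_of_eq_off_cyclicSet
    (fun _ ha => withPath_of_not_mem (by rwa [← List.mem_toFinset, toFinset_cyclicWord]))
    fun _ => exists_iterate_withPath_cyclicWord_eq_none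

lemma cyclicSet_withPerm_spine (hp : IsForest p) (x : Option α) :
    cyclicSet (withPerm (spine hp x) p) = (spine hp x).toFinset := by
  set l := spine hp x
  have hl := spine_nodup hp x
  have hidx : ∀ a ∈ l.toFinset, (l.toFinset.sort).idxOf a < l.length := fun a ha => by
    rw [← List.toFinset_card_of_nodup hl, ← Finset.length_sort (· ≤ ·)]
    exact List.idxOf_lt_length_of_mem ((Finset.mem_sort _).2 ha)
  refine cyclicSet_eq_of_eq_off hp (fun a ha => withPerm_of_not_mem (by simpa using ha))
    (fun a ha => ⟨_, List.mem_toFinset.2 (List.getElem_mem (hidx a ha)), ?_⟩) fun a ha b hb h => ?_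
  · rw [withPerm, if_pos (List.mem_toFinset.1 ha), List.getElem?_eq_getElem (hidx a ha)]
  · rw [Finset.mem_coe] at ha hb
    rw [withPerm, withPerm, if_pos (List.mem_toFinset.1 ha), if_pos (List.mem_toFinset.1 hb),
      List.getElem?_eq_getElem (hidx a ha), List.getElem?_eq_getElem (hidx b hb),
      Option.some_inj, hl.getElem_inj_iff, List.idxOf_inj ((Finset.mem_sort _).2 ha)] at h
    exact h

lemma spine_withPath_cyclicWord (f : α → Option α) :
    spine (isForest_withPath_cyclicWord f) (cyclicWord f).head? = cyclicWord f :=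
  List.ext_getElem? fun i => by
    rw [getElem?_spine, List.head?_eq_getElem?, iterate_step_withPath_getElem? cyclicWord_nodup,
      Nat.zero_add]

lemma withPerm_withPath_cyclicWord (f : α → Option α) :
    withPerm (cyclicWord f) (withPath (cyclicWord f) f) = f := by
  funext a
  by_cases ha : a ∈ cyclicWord f
  · have has : a ∈ (cyclicSet f).sort := by
      rwa [Finset.mem_sort, ← toFinset_cyclicWord, List.mem_toFinset]
    rw [withPerm, if_pos ha, toFinset_cyclicWord, getElem?_cyclicWord, List.getElem?_idxOf has,
      Option.bind_some]
  · rw [withPerm_of_not_mem ha, withPath_of_not_mem ha]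

lemma cyclicWord_withPerm_spine (hp : IsForest p) (x : Option α) :
    cyclicWord (withPerm (spine hp x) p) = spine hp x := by
  rw [cyclicWord, cyclicSet_withPerm_spine, filterMap_withPerm_sort (spine_nodup hp x)]

noncomputable def joyalEquiv (α : Type*) [Fintype α] [LinearOrder α] :
    (α → Option α) ≃ {p : α → Option α // IsForest p} × Option α where
  toFun f := (⟨withPath (cyclicWord f) f, isForest_withPath_cyclicWord f⟩, (cyclicWord f).head?)
  invFun x := withPerm (spine x.1.2 x.2) x.1.1
  left_inv f := by
    simp only [spine_withPath_cyclicWord, withPerm_withPath_cyclicWord]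
  right_inv := by
    rintro ⟨⟨p, hp⟩, x⟩
    refine Prod.ext (Subtype.ext ?_) ?_
    · change withPath (cyclicWord _) _ = p
      rw [cyclicWord_withPerm_spine, withPath_withPerm, withPath_spine]
    · change (cyclicWord _).head? = x
      rw [cyclicWord_withPerm_spine, head?_spine]

lemma card_isForest_mul (α : Type*) [Fintype α] [LinearOrder α] :
    Nat.card {p : α → Option α // IsForest p} * (Fintype.card α + 1) =
      (Fintype.card α + 1) ^ Fintype.card α := by
  have := Nat.card_congr (joyalEquiv α)
  rw [Nat.card_prod, Nat.card_eq_fintype_card (α := Option α), Fintype.card_option,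
    Nat.card_eq_fintype_card, Fintype.card_fun, Fintype.card_option] at this
  exact this.symm

end Cyclic

end ParentMap

lemma sum_rootedForests (n : ℕ) :
    ∑ k ∈ Finset.range (n + 1), rootedForests n k =
      Nat.card {F : SimpleGraph (Fin n) × Finset (Fin n) // F.1.IsAcyclic ∧ F.1.IsRootSet F.2} := by
  classical
  simp only [rootedForests, SimpleGraph.IsRootSet, Nat.card_eq_fintype_card, Fintype.card_subtype,
    ← and_assoc, ← Finset.filter_filter]
  refine (Finset.card_eq_sum_card_fiberwise fun F _ => ?_).symm
  simpa [Nat.lt_succ_iff] using F.2.card_le_univ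

/-- The number of rooted labeled forests on `n` vertices (with any number of
components) equals `(n+1)^(n-1)`. -/
theorem stmt_12 (n : ℕ) :
    ∑ k ∈ Finset.range (n + 1), rootedForests n k = (n + 1) ^ (n - 1) := by
  rw [sum_rootedForests, ← Nat.card_congr (ParentMap.forestEquiv (Fin n))]
  have h := ParentMap.card_isForest_mul (Fin n)
  rw [Fintype.card_fin] at h
  cases n with
  | zero => simpa using h
  | succ m => exact Nat.eq_of_mul_eq_mul_right (Nat.succ_pos _) (h.trans (pow_succ _ _))
end

section
/- For n ≥ 3, ∑_{N=1}^{n} C(n,N) N^{N-2} · N · A_{n-N}(-n) = 0, where A_m(x) = x(x+m)^{m-1} for m ≥ 1 and A_0(x) = 1; equivalently the weighted count ∑_F (-n)^{|M(F)|} N(F) over all decorated forests F on n labeled vertices vanishes. -/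
/-!
Substituting `x = -n` into the Abel polynomial gives `A_{n-N}(-n) = -n (-N)^{n-N-1}` for `N < n`,
so every summand collapses to `n (-1)^{n-N} C(n,N) N^{n-2}`. The sum is therefore `n` times the
`n`-th forward difference of `x ↦ x^{n-2}` at `0`, which vanishes because `n - 2 < n`.
-/

/-- The Abel polynomial with parameter `a = -1`:
`A m x = x(x+m)^{m-1}` for `m ≥ 1`, and `A 0 x = 1`. -/
def abel (m : ℕ) (x : ℚ) : ℚ := if m = 0 then 1 else x * (x + m) ^ (m - 1)

open Finset

theorem sum_range_neg_one_pow_mul_choose_mul_pow_eq_zero {R : Type*} [CommRing R] {j n : ℕ}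
    (h : j < n) : ∑ k ∈ range (n + 1), (-1 : R) ^ (n - k) * n.choose k * (k : R) ^ j = 0 := by
  have := congrFun (fwdDiff_iter_pow_eq_zero_of_lt (R := R) h) 0
  simpa [fwdDiff_iter_eq_sum_shift, zsmul_eq_mul] using this

theorem pow_sub_two_mul_self_mul_abel {n N : ℕ} (hN : 1 ≤ N) (hNn : N ≤ n) :
    (N : ℚ) ^ (N - 2) * N * abel (n - N) (-n) = n * (-1) ^ (n - N) * (N : ℚ) ^ (n - 2) := by
  rcases hNn.eq_or_lt with rfl | hlt
  · simp [abel, mul_comm]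
  have hpow : (N : ℚ) ^ (N - 2) * N = (N : ℚ) ^ (N - 1) := by
    rcases Nat.lt_or_ge N 2 with h | h
    · interval_cases N; norm_num
    · rw [← pow_succ]; congr 1; omega
  rw [hpow]
  obtain ⟨d, hd⟩ : ∃ d, n - N = d + 1 := ⟨n - N - 1, by omega⟩
  have hbase : -(n : ℚ) + ((d + 1 : ℕ) : ℚ) = -N := by
    rw [← hd, Nat.cast_sub hNn]; ring
  rw [hd, abel, if_neg d.succ_ne_zero, hbase, Nat.add_sub_cancel, neg_pow,
    show n - 2 = (N - 1) + d by omega, pow_add, pow_succ]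
  ring

theorem sum_Icc_one_eq_sum_range {M : Type*} [AddCommMonoid M] (f : ℕ → M) (h0 : f 0 = 0)
    (n : ℕ) : ∑ k ∈ Icc 1 n, f k = ∑ k ∈ range (n + 1), f k := by
  rw [range_eq_Ico, sum_eq_sum_Ico_succ_bot n.succ_pos, h0, zero_add]
  rfl

/-- For `n ≥ 3`, `∑_{N=1}^{n} C(n,N) N^{N-2} · N · A_{n-N}(-n) = 0`
(the weighted count `∑_F (-n)^{|M(F)|} N(F)` over decorated forests vanishes). -/
theorem stmt_18 (n : ℕ) (hn : 3 ≤ n) :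
    ∑ N ∈ Finset.Icc 1 n,
        (n.choose N : ℚ) * (N : ℚ) ^ (N - 2) * (N : ℚ) * abel (n - N) (-(n : ℚ)) = 0 := by
  calc _ = ∑ N ∈ Icc 1 n, n * ((-1 : ℚ) ^ (n - N) * n.choose N * (N : ℚ) ^ (n - 2)) := by
        refine sum_congr rfl fun N hN => ?_
        obtain ⟨hN1, hNn⟩ := mem_Icc.mp hN
        rw [mul_assoc _ _ (N : ℚ), mul_assoc, pow_sub_two_mul_self_mul_abel hN1 hNn]
        ring
    _ = n * ∑ N ∈ range (n + 1), (-1 : ℚ) ^ (n - N) * n.choose N * (N : ℚ) ^ (n - 2) := by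
        rw [← mul_sum, sum_Icc_one_eq_sum_range _ (by simp [zero_pow (by omega : n - 2 ≠ 0)])]
    _ = 0 := by rw [sum_range_neg_one_pow_mul_choose_mul_pow_eq_zero (by omega), mul_zero]
end
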